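/- (Uniform r/x ratio implies C1.) Suppose r_ij / x_ij = r_jk / x_jk for any two adjacent lines (i,j), (j,k) ∈ E, and v̲_i − 2 r_ij P̂⁺_ij(p̄) − 2 x_ij Q̂⁺_ij(q̄) > 0 for every line (i,j) with i not a leaf. Then C1 holds: for every leaf l and all 1 ≤ s ≤ t ≤ n_l, the vector A̲_{l_s} ⋯ A̲_{l_{t−1}} u_{l_t} is componentwise strictly positive; moreover its two components are in ratio r/x equal to the common line ratio. -/

import Mathlib

/-!
`A̲_i` is the identity minus a rank-one matrix with column space spanned by `u_i`, so `u_i` is an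
eigenvector of `A̲_i` with eigenvalue `(v̲_i − 2 r_i P̂⁺_i(p̄) − 2 x_i Q̂⁺_i(q̄)) / v̲_i`, which is
positive at every non-leaf bus. A uniform `r/x` ratio makes the vectors `u_{l_k}` along the path
from the root to a leaf `l` positive multiples of one another, so each factor of
`A̲_{l_s} ⋯ A̲_{l_{t−1}}` scales `u_{l_t}` by a positive number.
-/

open Classical Finset

noncomputable section

/-- Product `A (bus s) * A (bus (s+1)) * ⋯ * A (bus (t-1))` applied to the vector `u`
(the empty product, when `s ≥ t`, is the identity). -/
def chainApply (A : ℕ → Matrix (Fin 2) (Fin 2) ℝ) (bus : ℕ → ℕ) (s t : ℕ)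
    (u : Fin 2 → ℝ) : Fin 2 → ℝ :=
  if _ : s < t then (A (bus s)).mulVec (chainApply A bus (s + 1) t u) else u
termination_by t - s

/-- Number of steps from bus `l` to the root `0` along the parent map `par`
(the depth `n_l` of bus `l` in the tree). -/
def depth (par : ℕ → ℕ) (l : ℕ) : ℕ :=
  if h : ∃ k, par^[k] l = 0 then Nat.find h else 0

/-- Bus `i` lies on the path `P_h` from bus `h` to the root. -/
def onPath (par : ℕ → ℕ) (i h : ℕ) : Prop := ∃ k, par^[k] h = i

/-- `P̂_{i,par i}(p) = Σ_{h : i ∈ P_h} p_h`, the linear-DistFlow power flow on line `(i, par i)`. -/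
def hatP (n : ℕ) (par : ℕ → ℕ) (p : ℕ → ℝ) (i : ℕ) : ℝ :=
  ∑ h ∈ (Finset.Icc 1 n).filter (fun h => onPath par i h), p h

/-- The vector `u_i = (r_{i,par i}, x_{i,par i})ᵀ`. -/
def uvec (r x : ℕ → ℝ) (i : ℕ) : Fin 2 → ℝ := ![r i, x i]

/-- The matrix `A̲_i = I − (2/v̲_i) u_i (P̂⁺_i(p̄), Q̂⁺_i(q̄))`. -/
def Amat (n : ℕ) (par : ℕ → ℕ) (r x vlow p q : ℕ → ℝ) (i : ℕ) :
    Matrix (Fin 2) (Fin 2) ℝ :=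
  1 - (2 / vlow i) •
    Matrix.of (fun a b => uvec r x i a * ![max (hatP n par p i) 0, max (hatP n par q i) 0] b)

/-- A leaf bus: a bus in `{1,…,n}` with no children. -/
def IsLeaf (n : ℕ) (par : ℕ → ℕ) (l : ℕ) : Prop :=
  1 ≤ l ∧ l ≤ n ∧ ∀ i, 1 ≤ i → i ≤ n → par i ≠ l

/-- Condition C1: `A̲_{l_s} ⋯ A̲_{l_{t-1}} u_{l_t} > 0` componentwise for every leaf `l`
and all `1 ≤ s ≤ t ≤ n_l`, where `l_k = par^[n_l − k] l`. -/
def C1 (n : ℕ) (par : ℕ → ℕ) (r x vlow p q : ℕ → ℝ) : Prop :=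
  ∀ l, IsLeaf n par l → ∀ s t, 1 ≤ s → s ≤ t → t ≤ depth par l →
    ∀ a, 0 < chainApply (Amat n par r x vlow p q) (fun k => par^[depth par l - k] l) s t
      (uvec r x (par^[depth par l - t] l)) a

open Matrix

theorem Matrix.one_sub_smul_vecMulVec_mulVec_self {ι R : Type*} [Fintype ι] [DecidableEq ι]
    [CommRing R] (a : R) (u w : ι → R) :
    (1 - a • vecMulVec u w) *ᵥ u = (1 - a * (w ⬝ᵥ u)) • u := by
  rw [sub_mulVec, one_mulVec, smul_mulVec, vecMulVec_mulVec, op_smul_eq_smul, sub_smul, one_smul,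
    mul_smul]

theorem Amat_mulVec_uvec {n : ℕ} {par : ℕ → ℕ} {r x vlow p q : ℕ → ℝ} {i : ℕ} (hv : vlow i ≠ 0) :
    Amat n par r x vlow p q i *ᵥ uvec r x i =
      ((vlow i - 2 * r i * max (hatP n par p i) 0 - 2 * x i * max (hatP n par q i) 0) / vlow i)
        • uvec r x i := by
  rw [Amat, ← vecMulVec, one_sub_smul_vecMulVec_mulVec_self]
  congr 1
  simp only [dotProduct, uvec, Fin.sum_univ_two, cons_val_zero, cons_val_one, cons_val_fin_one]
  field_simp
  ring

theorem chainApply_eq_smul {A : ℕ → Matrix (Fin 2) (Fin 2) ℝ} {bus : ℕ → ℕ} {s t : ℕ}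
    {v : Fin 2 → ℝ} (h : ∀ k, s ≤ k → k < t → ∃ μ : ℝ, 0 < μ ∧ A (bus k) *ᵥ v = μ • v) :
    ∃ c : ℝ, 0 < c ∧ chainApply A bus s t v = c • v := by
  induction s using chainApply.induct t with
  | case1 s hst ih =>
    obtain ⟨c, hc, hchain⟩ := ih fun k hk hkt => h k (by omega) hkt
    obtain ⟨μ, hμ, hA⟩ := h s le_rfl hst
    refine ⟨μ * c, mul_pos hμ hc, ?_⟩
    rw [chainApply, dif_pos hst, hchain, mulVec_smul, hA, smul_smul, mul_comm]
  | case2 s hst => exact ⟨1, one_pos, by rw [chainApply, dif_neg hst, one_smul]⟩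

theorem uvec_eq_smul_of_div_eq {r x : ℕ → ℝ} {i j : ℕ} (hxi : x i ≠ 0) (hxj : x j ≠ 0)
    (h : r j / x j = r i / x i) : uvec r x j = (x j / x i) • uvec r x i := by
  ext a
  fin_cases a
  · simp only [uvec, Fin.zero_eta, cons_val_zero, Pi.smul_apply, smul_eq_mul]
    field_simp at h ⊢
    linarith
  · simp [uvec, hxi]

theorem iterate_ne_zero_of_lt_depth {par : ℕ → ℕ} {l m : ℕ} (h : m < depth par l) :
    par^[m] l ≠ 0 := by
  unfold depth at h
  split_ifs at h with hroot
  · exact Nat.find_min hroot h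
  · omega

theorem iterate_le_self_of_le_depth {par : ℕ → ℕ} (hpar : ∀ i, 1 ≤ i → par i < i) {l m : ℕ}
    (hm : m ≤ depth par l) : par^[m] l ≤ l := by
  induction m with
  | zero => rfl
  | succ m ih =>
    rw [Function.iterate_succ_apply']
    have hne := iterate_ne_zero_of_lt_depth (Nat.lt_of_succ_le hm)
    exact (hpar _ (Nat.one_le_iff_ne_zero.2 hne)).le.trans (ih (by omega))

/-- The paper's `l_k`: the bus `k` steps from the root on the path to `l`. -/
def pathBus (par : ℕ → ℕ) (l k : ℕ) : ℕ := par^[depth par l - k] l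

section pathBus

variable {par : ℕ → ℕ} {l k : ℕ}

theorem one_le_pathBus (hk : 1 ≤ k) (hkd : k ≤ depth par l) : 1 ≤ pathBus par l k :=
  Nat.one_le_iff_ne_zero.2 (iterate_ne_zero_of_lt_depth (by omega))

theorem pathBus_le_self (hpar : ∀ i, 1 ≤ i → par i < i) : pathBus par l k ≤ l :=
  iterate_le_self_of_le_depth hpar (Nat.sub_le _ _)

theorem par_pathBus_succ (hk : k < depth par l) :
    par (pathBus par l (k + 1)) = pathBus par l k := by
  rw [pathBus, pathBus, ← Function.iterate_succ_apply' par]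
  congr 1
  omega

theorem not_isLeaf_pathBus {n : ℕ} (hpar : ∀ i, 1 ≤ i → par i < i) (hln : l ≤ n)
    (hk : k < depth par l) : ¬ IsLeaf n par (pathBus par l k) := fun hleaf =>
  hleaf.2.2 _ (one_le_pathBus (by omega) hk) ((pathBus_le_self hpar).trans hln)
    (par_pathBus_succ hk)

theorem div_pathBus_eq {n : ℕ} {r x : ℕ → ℝ} (hpar : ∀ i, 1 ≤ i → par i < i)
    (hratio : ∀ i, 1 ≤ i → i ≤ n → 1 ≤ par i → r i / x i = r (par i) / x (par i))
    (hln : l ≤ n) (hk : 1 ≤ k) {t : ℕ} (hkt : k ≤ t) (ht : t ≤ depth par l) :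
    r (pathBus par l t) / x (pathBus par l t) = r (pathBus par l k) / x (pathBus par l k) := by
  induction t, hkt using Nat.le_induction with
  | base => rfl
  | succ t hkt ih =>
    have hstep := hratio _ (one_le_pathBus (by omega) ht) ((pathBus_le_self hpar).trans hln)
      (by rw [par_pathBus_succ ht]; exact one_le_pathBus (by omega) (by omega))
    rw [hstep, par_pathBus_succ ht, ih (by omega)]

end pathBus

theorem exists_pos_Amat_pathBus_mulVec_uvec {n : ℕ} {par : ℕ → ℕ} {r x vlow p q : ℕ → ℝ}
    (hpar : ∀ i, 1 ≤ i → par i < i) (hx : ∀ i, 1 ≤ i → i ≤ n → 0 < x i)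
    (hv : ∀ i, 1 ≤ i → i ≤ n → 0 < vlow i)
    (hratio : ∀ i, 1 ≤ i → i ≤ n → 1 ≤ par i → r i / x i = r (par i) / x (par i))
    (hvolt : ∀ i, 1 ≤ i → i ≤ n → ¬ IsLeaf n par i →
      0 < vlow i - 2 * r i * max (hatP n par p i) 0 - 2 * x i * max (hatP n par q i) 0)
    {l k t : ℕ} (hln : l ≤ n) (hk : 1 ≤ k) (hkt : k < t) (ht : t ≤ depth par l) :
    ∃ μ : ℝ, 0 < μ ∧
      Amat n par r x vlow p q (pathBus par l k) *ᵥ uvec r x (pathBus par l t) =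
        μ • uvec r x (pathBus par l t) := by
  set i := pathBus par l k
  have hi1 : 1 ≤ i := one_le_pathBus hk (by omega)
  have hin : i ≤ n := (pathBus_le_self hpar).trans hln
  have hj1 : 1 ≤ pathBus par l t := one_le_pathBus (by omega) ht
  have hjn : pathBus par l t ≤ n := (pathBus_le_self hpar).trans hln
  refine ⟨_, div_pos (hvolt i hi1 hin (not_isLeaf_pathBus hpar hln (by omega))) (hv i hi1 hin),
    ?_⟩
  rw [uvec_eq_smul_of_div_eq (hx i hi1 hin).ne' (hx _ hj1 hjn).ne'
      (div_pathBus_eq hpar hratio hln hk hkt.le ht),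
    mulVec_smul, Amat_mulVec_uvec (hv i hi1 hin).ne', smul_comm]

theorem c1_of_uniform_ratio_general (n : ℕ) (par : ℕ → ℕ) (r x vlow p q : ℕ → ℝ)
    (hpar : ∀ i, 1 ≤ i → par i < i)
    (hr : ∀ i, 1 ≤ i → i ≤ n → 0 < r i) (hx : ∀ i, 1 ≤ i → i ≤ n → 0 < x i)
    (hv : ∀ i, 1 ≤ i → i ≤ n → 0 < vlow i)
    (hratio : ∀ i, 1 ≤ i → i ≤ n → 1 ≤ par i → r i / x i = r (par i) / x (par i))
    (hvolt : ∀ i, 1 ≤ i → i ≤ n → ¬ IsLeaf n par i →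
      0 < vlow i - 2 * r i * max (hatP n par p i) 0 - 2 * x i * max (hatP n par q i) 0) :
    ∀ l, IsLeaf n par l → ∀ s t, 1 ≤ s → s ≤ t → t ≤ depth par l →
      (∀ a, 0 < chainApply (Amat n par r x vlow p q) (fun k => par^[depth par l - k] l) s t
        (uvec r x (par^[depth par l - t] l)) a) ∧
      chainApply (Amat n par r x vlow p q) (fun k => par^[depth par l - k] l) s t
            (uvec r x (par^[depth par l - t] l)) 0 /
        chainApply (Amat n par r x vlow p q) (fun k => par^[depth par l - k] l) s t
            (uvec r x (par^[depth par l - t] l)) 1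
        = r (par^[depth par l - t] l) / x (par^[depth par l - t] l) := by
  intro l ⟨_, hln, _⟩ s t hs _ ht
  obtain ⟨c, hc, hchain⟩ := chainApply_eq_smul (bus := fun k => par^[depth par l - k] l)
    (v := uvec r x (par^[depth par l - t] l)) fun k hsk hkt =>
      exists_pos_Amat_pathBus_mulVec_uvec hpar hx hv hratio hvolt hln (hs.trans hsk) hkt ht
  have hj1 : 1 ≤ pathBus par l t := one_le_pathBus (by omega) ht
  have hjn : pathBus par l t ≤ n := (pathBus_le_self hpar).trans hln
  rw [hchain]
  simp only [uvec, Pi.smul_apply, smul_eq_mul, Fin.forall_fin_two, cons_val_zero, cons_val_one,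
    cons_val_fin_one]
  exact ⟨⟨mul_pos hc (hr _ hj1 hjn), mul_pos hc (hx _ hj1 hjn)⟩,
    mul_div_mul_left _ _ hc.ne'⟩

/-- Claim 4 / Theorem 4(ii): if all lines have the same `r/x` ratio and
`v̲_i − 2 r_i P̂⁺_i(p̄) − 2 x_i Q̂⁺_i(q̄) > 0` for every line whose upper endpoint is not a leaf,
then C1 holds; moreover each product vector has components in the common ratio `r/x`. -/
theorem c1_of_uniform_ratio (n : ℕ) (par : ℕ → ℕ) (r x vlow p q : ℕ → ℝ)
    (hpar0 : par 0 = 0) (hpar : ∀ i, 1 ≤ i → par i < i)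
    (hr : ∀ i, 1 ≤ i → i ≤ n → 0 < r i) (hx : ∀ i, 1 ≤ i → i ≤ n → 0 < x i)
    (hv : ∀ i, 1 ≤ i → i ≤ n → 0 < vlow i)
    (hratio : ∀ i, 1 ≤ i → i ≤ n → 1 ≤ par i → r i / x i = r (par i) / x (par i))
    (hvolt : ∀ i, 1 ≤ i → i ≤ n → ¬ IsLeaf n par i →
      0 < vlow i - 2 * r i * max (hatP n par p i) 0 - 2 * x i * max (hatP n par q i) 0) :
    ∀ l, IsLeaf n par l → ∀ s t, 1 ≤ s → s ≤ t → t ≤ depth par l →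
      (∀ a, 0 < chainApply (Amat n par r x vlow p q) (fun k => par^[depth par l - k] l) s t
        (uvec r x (par^[depth par l - t] l)) a) ∧
      chainApply (Amat n par r x vlow p q) (fun k => par^[depth par l - k] l) s t
            (uvec r x (par^[depth par l - t] l)) 0 /
        chainApply (Amat n par r x vlow p q) (fun k => par^[depth par l - k] l) s t
            (uvec r x (par^[depth par l - t] l)) 1
        = r (par^[depth par l - t] l) / x (par^[depth par l - t] l) :=
  c1_of_uniform_ratio_general n par r x vlow p q hpar hr hx hv hratio hvolt
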